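/- SubGaussianity of the clipped logit of a Gaussian-perturbed binomial proportion (Lemma H.2): Fix β ∈ (1/2, 1). There exists a constant C > 0 depending only on β (the paper gives C = (6√(2e)·(3√(log 2)+1))²·3/(2(1−β)^4)) such that for every ε, δ ∈ (0,1), every n ∈ ℕ with n ≥ 1 and p ∈ [1−β, β], with Y_n ~ Binomial(n, p) and X̃_n = Y_n/n + ξ_n where ξ_n is an independent Gaussian with mean 0 and variance 2·log(1.25/δ)/(εn)², the random variable f(X̃_n) is subGaussian with variance proxy at most C·(1/n + 8·log(1.25/δ)/(εn)²); that is, E[exp(t·(f(X̃_n) − E[f(X̃_n)]))] ≤ exp(C·(1/n + 8·log(1.25/δ)/(εn)²)·t²/2) for all t ∈ ℝ. -/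

import Mathlib

open MeasureTheory ProbabilityTheory Real Set Finset
open scoped NNReal unitInterval

noncomputable def flog (β x : ℝ) : ℝ :=
  if x ≤ 1 - β then Real.log ((1 - β) / β)
  else if β ≤ x then Real.log (β / (1 - β))
  else Real.log (x / (1 - x))

def HasBinomialLaw {Ω : Type*} [MeasurableSpace Ω] (P : Measure Ω)
    (Y : Ω → ℕ) (m : ℕ) (p : ℝ) : Prop :=
  ∀ t : ℕ, P {ω | Y ω = t} =
    ENNReal.ofReal ((m.choose t : ℝ) * p ^ t * (1 - p) ^ (m - t))

/-!
The clipped logit `flog β` is bounded by `log (β / (1 - β))` and `L`-Lipschitz with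
`L = 2 / (1 - β)`: clipping to `[1 - β, β]` is 1-Lipschitz and there the logit has derivative
`1 / (z (1 - z)) ≤ 2 / (1 - β)`.

Condition on `Y = k`. Then `flog β (k / n + ξ)` is a Lipschitz function `φ` of a Gaussian `ξ` of
variance `v`, and symmetrization with an independent copy `ξ'` gives
`E exp (t (φ ξ - E φ ξ)) ≤ E cosh (t (φ ξ - φ ξ')) ≤ E cosh (t L (ξ - ξ')) = exp (L² v t²)`.
The conditional mean `g k = E flog β (k / n + ξ)` moves by at most `L / n` when `k` grows by one.
By Pascal's rule `Bin(n + 1, p)` is `Bin(n, p)` followed by one more Bernoulli trial, so a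
two-point bound at each trial gives `E exp (t (g Y - E g Y)) ≤ exp (n (L / n)² t² / 2)`.
The two variance proxies add up to `L² (1 / n + 2 v) ≤ L² (1 / n + 8 log (1.25 / δ) / (ε n)²)`,
so `C = L²` works.
-/

section ClippedLogit

variable {β : ℝ} (hβ : β ∈ Ico (1 / 2 : ℝ) 1)
include hβ

lemma flog_eq_log_projIcc (x : ℝ) :
    flog β x = log (projIcc (1 - β) β (by linarith [hβ.1]) x /
      (1 - projIcc (1 - β) β (by linarith [hβ.1]) x)) := by
  have := hβ.1
  unfold flog
  split_ifs with h₁ h₂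
  · rw [projIcc_of_le_left _ h₁]
    ring_nf
  · rw [projIcc_of_right_le _ h₂]
  · rw [projIcc_of_mem _ ⟨by linarith, by linarith⟩]

lemma abs_log_div_one_sub_le {z : ℝ} (hz : z ∈ Icc (1 - β) β) :
    |log (z / (1 - z))| ≤ log (β / (1 - β)) := by
  obtain ⟨h₁, h₂⟩ := hz
  have : β < 1 := hβ.2
  have : 0 < 1 - β := by linarith
  have : 0 < β := by linarith [hβ.1]
  rw [abs_le, ← log_inv, inv_div]
  constructor
  all_goals gcongr <;> first | linarith | exact div_pos (by linarith) (by linarith)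

lemma lipschitzOnWith_log_div_one_sub :
    LipschitzOnWith (2 / (1 - β)).toNNReal (fun z => log (z / (1 - z))) (Icc (1 - β) β) := by
  have : β < 1 := hβ.2
  have : 1 / 2 ≤ β := hβ.1
  refine Convex.lipschitzOnWith_of_nnnorm_hasDerivWithin_le (f' := fun z => 1 / (z * (1 - z)))
    (convex_Icc _ _) (fun z hz => ?_) (fun z hz => ?_)
  · have hz₀ : 0 < z := by linarith [hz.1]
    have hz₁ : 0 < 1 - z := by linarith [hz.2]
    refine HasDerivAt.hasDerivWithinAt ?_
    refine (((hasDerivAt_id' z).div ((hasDerivAt_id' z).const_sub 1) hz₁.ne').log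
      (div_pos hz₀ hz₁).ne').congr_deriv ?_
    simp only [Pi.div_apply]
    field_simp
    ring
  · have hz₀ : (1 - β) * β ≤ z * (1 - z) := by nlinarith [hz.1, hz.2]
    have : 0 < 1 - β := by linarith
    have hz : 0 < z * (1 - z) := by nlinarith
    rw [← NNReal.coe_le_coe, coe_nnnorm, Real.coe_toNNReal _ (by positivity),
      norm_of_nonneg (one_div_pos.2 hz).le, div_le_div_iff₀ hz this]
    nlinarith

lemma abs_flog_le (x : ℝ) : |flog β x| ≤ log (β / (1 - β)) := by
  rw [flog_eq_log_projIcc hβ]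
  exact abs_log_div_one_sub_le hβ (projIcc _ _ _ x).2

lemma lipschitzWith_flog : LipschitzWith (2 / (1 - β)).toNNReal (flog β) := by
  have h := (lipschitzOnWith_log_div_one_sub hβ).to_restrict.comp
    (LipschitzWith.projIcc (by linarith [hβ.1] : 1 - β ≤ β))
  rw [mul_one] at h
  rw [funext (flog_eq_log_projIcc hβ)]
  exact h

end ClippedLogit

lemma integrable_exp_of_abs_le {α : Type*} [MeasurableSpace α] {μ : Measure α} [IsFiniteMeasure μ]
    {f : α → ℝ} {C : ℝ} (hf : Measurable f) (hC : ∀ x, |f x| ≤ C) :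
    Integrable (fun x => exp (f x)) μ :=
  .of_bound hf.exp.aestronglyMeasurable (exp C) (ae_of_all _ fun x => by
    rw [norm_of_nonneg (exp_pos _).le]
    exact exp_le_exp.2 ((le_abs_self _).trans (hC x)))

lemma abs_integral_le_of_abs_le {α : Type*} [MeasurableSpace α] {μ : Measure α}
    [IsProbabilityMeasure μ] {f : α → ℝ} {M : ℝ} (hf : ∀ x, |f x| ≤ M) : |∫ x, f x ∂μ| ≤ M := by
  simpa using norm_integral_le_of_norm_le_const (μ := μ) (f := f) (ae_of_all _ hf)

lemma integral_exp_sub_integral_le_integral_cosh {α : Type*} [MeasurableSpace α]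
    {μ : Measure α} [IsProbabilityMeasure μ] {φ : α → ℝ} {M : ℝ} (hφ : Measurable φ)
    (hb : ∀ x, |φ x| ≤ M) (t : ℝ) :
    ∫ x, exp (t * (φ x - ∫ y, φ y ∂μ)) ∂μ ≤ ∫ z, cosh (t * (φ z.1 - φ z.2)) ∂μ.prod μ := by
  have hbound : ∀ s x y, |s * (φ x - φ y)| ≤ |s| * (M + M) := fun s x y => by
    rw [abs_mul]; gcongr; exact (abs_sub _ _).trans (add_le_add (hb x) (hb y))
  have hexp : ∀ s, Integrable (fun z : α × α => exp (s * (φ z.1 - φ z.2))) (μ.prod μ) :=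
    fun s => integrable_exp_of_abs_le (by fun_prop) fun z => hbound s z.1 z.2
  have jensen : ∀ x, exp (t * (φ x - ∫ y, φ y ∂μ)) ≤ ∫ y, exp (t * (φ x - φ y)) ∂μ := by
    intro x
    have hφi : Integrable φ μ := .of_bound hφ.aestronglyMeasurable M (ae_of_all _ hb)
    have h := convexOn_exp.map_integral_le continuousOn_exp isClosed_univ
      (ae_of_all μ fun y => mem_univ (t * (φ x - φ y)))
      (((integrable_const _).sub hφi).const_mul t)
      (integrable_exp_of_abs_le (by fun_prop) (hbound t x))
    rwa [integral_const_mul, integral_sub (integrable_const _) hφi, integral_const,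
      probReal_univ, one_smul] at h
  have hswap : ∫ z, exp (-(t * (φ z.1 - φ z.2))) ∂μ.prod μ
      = ∫ z, exp (t * (φ z.1 - φ z.2)) ∂μ.prod μ := by
    rw [← integral_prod_swap]
    congr with z
    simp only [Prod.fst_swap, Prod.snd_swap]
    ring_nf
  calc ∫ x, exp (t * (φ x - ∫ y, φ y ∂μ)) ∂μ
      ≤ ∫ x, ∫ y, exp (t * (φ x - φ y)) ∂μ ∂μ :=
        integral_mono_of_nonneg (ae_of_all _ fun _ => (exp_pos _).le)
          (hexp t).integral_prod_left (ae_of_all _ jensen)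
    _ = ∫ z, exp (t * (φ z.1 - φ z.2)) ∂μ.prod μ := (integral_prod _ (hexp t)).symm
    _ = ∫ z, cosh (t * (φ z.1 - φ z.2)) ∂μ.prod μ := by
        simp_rw [cosh_eq]
        rw [integral_div, integral_add (hexp t) ?_, hswap]
        · ring
        · simpa only [neg_mul] using hexp (-t)

lemma integral_exp_mul_gaussianReal (v : ℝ≥0) (s : ℝ) :
    ∫ x, exp (s * x) ∂gaussianReal 0 v = exp (v * s ^ 2 / 2) := by
  simpa [mgf] using congrFun (mgf_fun_id_gaussianReal (μ := 0) (v := v)) s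

lemma integral_cosh_mul_sub_gaussianReal_prod (v : ℝ≥0) (s : ℝ) :
    ∫ z, cosh (s * (z.1 - z.2)) ∂(gaussianReal 0 v).prod (gaussianReal 0 v) = exp (v * s ^ 2) := by
  have h (r : ℝ) : Integrable (fun z : ℝ × ℝ => exp (r * z.1) * exp (-r * z.2))
      ((gaussianReal 0 v).prod (gaussianReal 0 v)) :=
    (integrable_exp_mul_gaussianReal r).mul_prod (integrable_exp_mul_gaussianReal (-r))
  have hcosh (z : ℝ × ℝ) : cosh (s * (z.1 - z.2))
      = (exp (s * z.1) * exp (-s * z.2) + exp (-s * z.1) * exp (- -s * z.2)) / 2 := by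
    rw [cosh_eq, ← exp_add, ← exp_add]; ring_nf
  simp_rw [hcosh]
  rw [integral_div, integral_add (h s) (h (-s)),
    integral_prod_mul (fun x => exp (s * x)) (fun y => exp (-s * y)),
    integral_prod_mul (fun x => exp (-s * x)) (fun y => exp (- -s * y))]
  simp only [integral_exp_mul_gaussianReal, ← exp_add]
  ring_nf

lemma LipschitzWith.integral_exp_sub_integral_gaussianReal_le {K : ℝ≥0} {φ : ℝ → ℝ} {M : ℝ}
    (hφ : LipschitzWith K φ) (hb : ∀ x, |φ x| ≤ M) (v : ℝ≥0) (t : ℝ) :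
    ∫ x, exp (t * (φ x - ∫ y, φ y ∂gaussianReal 0 v)) ∂gaussianReal 0 v
      ≤ exp (2 * K ^ 2 * v * t ^ 2 / 2) := by
  have hcosh : ∫ z, cosh (t * K * (z.1 - z.2)) ∂(gaussianReal 0 v).prod (gaussianReal 0 v)
      = exp (2 * K ^ 2 * v * t ^ 2 / 2) := by
    rw [integral_cosh_mul_sub_gaussianReal_prod]; ring_nf
  calc _ ≤ ∫ z, cosh (t * (φ z.1 - φ z.2)) ∂(gaussianReal 0 v).prod (gaussianReal 0 v) :=
        integral_exp_sub_integral_le_integral_cosh hφ.continuous.measurable hb t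
    _ ≤ ∫ z, cosh (t * K * (z.1 - z.2)) ∂(gaussianReal 0 v).prod (gaussianReal 0 v) := by
        refine integral_mono_of_nonneg (ae_of_all _ fun _ => (cosh_pos _).le)
          (.of_integral_ne_zero (hcosh ▸ (exp_pos _).ne')) (ae_of_all _ fun z => ?_)
        rw [cosh_le_cosh, abs_mul, mul_assoc, abs_mul, abs_mul, NNReal.abs_eq]
        gcongr
        simpa only [Real.dist_eq] using hφ.dist_le_mul z.1 z.2
    _ = _ := hcosh

lemma HasBinomialLaw.map_eq_binomial {Ω : Type*} [MeasurableSpace Ω] {P : Measure Ω} {Y : Ω → ℕ}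
    {n : ℕ} {p : ℝ} (h : HasBinomialLaw P Y n p) (hY : Measurable Y) (hp : p ∈ I) :
    P.map Y = binomial n ⟨p, hp⟩ :=
  Measure.ext_of_singleton fun k => by
    rw [Measure.map_apply hY (measurableSet_singleton k), binomial_singleton]
    exact h k

lemma integral_binomial_succ (n : ℕ) (p : I) (f : ℕ → ℝ) :
    ∫ k, f k ∂binomial (n + 1) p = ∫ k, ((1 - p) * f k + p * f (k + 1)) ∂binomial n p := by
  have h (m : ℕ) (g : ℕ → ℝ) : ∫ k, g k ∂binomial m p = ∑ ij ∈ antidiagonal m,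
      (m.choose ij.1 : ℝ) * ((p : ℝ) ^ ij.1 * (1 - p) ^ ij.2 * g ij.1) := by
    rw [integral_binomial, ← Nat.range_succ_eq_Iic, Finset.Nat.sum_antidiagonal_eq_sum_range_succ
      (fun i j => (m.choose i : ℝ) * ((p : ℝ) ^ i * (1 - p) ^ j * g i))]
    simp only [smul_eq_mul, mul_assoc]
  rw [h, h, sum_antidiagonal_choose_succ_mul (fun i j => (p : ℝ) ^ i * (1 - p) ^ j * f i),
    ← sum_add_distrib]
  refine sum_congr rfl fun ij hij => ?_
  rw [← Nat.choose_symm_of_eq_add (mem_antidiagonal.1 hij).symm]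
  ring

lemma one_sub_mul_exp_add_mul_exp_le {p : ℝ} (hp₀ : 0 ≤ p) (hp₁ : p ≤ 1) (a b : ℝ) :
    (1 - p) * exp a + p * exp b ≤ exp ((1 - p) * a + p * b + (b - a) ^ 2 / 2) := by
  obtain ⟨s, rfl⟩ : ∃ s, b = a + s := ⟨b - a, by ring⟩
  -- Symmetrization: `exp (-(p * s))` is at most the Bernoulli mgf at `-s` (Jensen), and the
  -- product of the mgfs at `s` and `-s` is `1 + 2 p (1 - p) (cosh s - 1) ≤ cosh s`.
  have jensen : exp (-(p * s)) ≤ 1 - p + p * exp (-s) := by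
    simpa [smul_eq_mul] using convexOn_exp.2 (mem_univ 0) (mem_univ (-s)) (sub_nonneg.2 hp₁) hp₀
      (sub_add_cancel 1 p)
  have hpos : 0 ≤ 1 - p + p * exp s := by nlinarith [exp_pos s]
  have hcosh : (1 - p + p * exp (-s)) * (1 - p + p * exp s) ≤ cosh s := by
    have h₁ : exp s * exp (-s) = 1 := by rw [← exp_add, add_neg_cancel, exp_zero]
    have h₂ : 1 ≤ cosh s := one_le_cosh s
    have h₃ : 0 ≤ 1 - 2 * p * (1 - p) := by nlinarith [sq_nonneg (2 * p - 1)]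
    rw [cosh_eq] at h₂ ⊢
    nlinarith [mul_nonneg h₃ (sub_nonneg.2 h₂)]
  calc (1 - p) * exp a + p * exp (a + s)
      = exp a * exp (p * s) * (exp (-(p * s)) * (1 - p + p * exp s)) := by
        have hps : exp (p * s) * exp (-(p * s)) = 1 := by rw [← exp_add, add_neg_cancel, exp_zero]
        rw [exp_add]
        linear_combination (-(exp a * (1 - p + p * exp s))) * hps
    _ ≤ exp a * exp (p * s) * cosh s :=
        mul_le_mul_of_nonneg_left ((mul_le_mul_of_nonneg_right jensen hpos).trans hcosh)
          (by positivity)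
    _ ≤ exp a * exp (p * s) * exp (s ^ 2 / 2) := by gcongr; exact cosh_le_exp_half_sq s
    _ = exp ((1 - p) * a + p * (a + s) + (a + s - a) ^ 2 / 2) := by
        rw [← exp_add, ← exp_add]; ring_nf

lemma integral_exp_binomial_le (p : I) {g : ℕ → ℝ} {c : ℝ} (hg : ∀ k, |g (k + 1) - g k| ≤ c)
    (t : ℝ) (n : ℕ) :
    ∫ k, exp (t * g k) ∂binomial n p
      ≤ exp (t * ∫ k, g k ∂binomial n p + n * c ^ 2 * t ^ 2 / 2) := by
  induction n generalizing g with
  | zero => simp [binomial_zero]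
  | succ n ih =>
    set g' : ℕ → ℝ := fun k => (1 - p) * g k + p * g (k + 1)
    have hg' (k : ℕ) : |g' (k + 1) - g' k| ≤ c := by
      have h : g' (k + 1) - g' k = (1 - p) * (g (k + 1) - g k) + p * (g (k + 2) - g (k + 1)) := by
        simp only [g']; ring
      rw [h]
      refine (abs_add_le _ _).trans ?_
      rw [abs_mul, abs_mul, abs_of_nonneg (sub_nonneg.2 p.2.2), abs_of_nonneg p.2.1]
      nlinarith [hg k, hg (k + 1), p.2.1, p.2.2]
    have hstep (k : ℕ) : (1 - p) * exp (t * g k) + p * exp (t * g (k + 1))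
        ≤ exp (t * g' k + c ^ 2 * t ^ 2 / 2) := by
      refine (one_sub_mul_exp_add_mul_exp_le p.2.1 p.2.2 _ _).trans (exp_le_exp.2 ?_)
      have : (t * g (k + 1) - t * g k) ^ 2 ≤ c ^ 2 * t ^ 2 := by
        rw [← mul_sub, mul_pow, mul_comm (c ^ 2)]
        exact mul_le_mul_of_nonneg_left
          (sq_le_sq' (neg_le_of_abs_le (hg k)) (le_of_abs_le (hg k))) (sq_nonneg t)
      simp only [g']
      linarith
    calc ∫ k, exp (t * g k) ∂binomial (n + 1) p
        ≤ ∫ k, exp (t * g' k + c ^ 2 * t ^ 2 / 2) ∂binomial n p := by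
          rw [integral_binomial_succ]
          exact integral_mono (integrable_binomial _) (integrable_binomial _) hstep
      _ = exp (c ^ 2 * t ^ 2 / 2) * ∫ k, exp (t * g' k) ∂binomial n p := by
          rw [← integral_const_mul]; simp only [exp_add, mul_comm]
      _ ≤ exp (c ^ 2 * t ^ 2 / 2) * exp (t * ∫ k, g' k ∂binomial n p + n * c ^ 2 * t ^ 2 / 2) := by
          gcongr; exact ih hg'
      _ = exp (t * ∫ k, g k ∂binomial (n + 1) p + (n + 1 : ℕ) * c ^ 2 * t ^ 2 / 2) := by
          rw [← exp_add, integral_binomial_succ]; congr 1; push_cast; ring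

lemma integral_exp_sub_integral_binomial_le (p : I) {g : ℕ → ℝ} {c : ℝ}
    (hg : ∀ k, |g (k + 1) - g k| ≤ c) (t : ℝ) (n : ℕ) :
    ∫ k, exp (t * (g k - ∫ k', g k' ∂binomial n p)) ∂binomial n p
      ≤ exp (n * c ^ 2 * t ^ 2 / 2) := by
  set m := ∫ k', g k' ∂binomial n p
  have h (k : ℕ) : exp (t * (g k - m)) = exp (t * g k) * exp (-(t * m)) := by
    rw [← exp_add]; ring_nf
  simp_rw [h]
  rw [integral_mul_const]
  calc _ ≤ exp (t * m + n * c ^ 2 * t ^ 2 / 2) * exp (-(t * m)) :=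
        mul_le_mul_of_nonneg_right (integral_exp_binomial_le p hg t n) (exp_pos _).le
    _ = _ := by rw [← exp_add]; ring_nf

lemma integral_exp_sub_integral_prod_le {α β : Type*} [MeasurableSpace α] [MeasurableSpace β]
    {ν : Measure α} {γ : Measure β} [IsProbabilityMeasure ν] [IsProbabilityMeasure γ]
    {F : α × β → ℝ} {M : ℝ} (hF : Measurable F) (hb : ∀ x, |F x| ≤ M) {c₁ c₂ t : ℝ}
    (h₁ : ∀ a, ∫ z, exp (t * (F (a, z) - ∫ z', F (a, z') ∂γ)) ∂γ ≤ exp (c₁ * t ^ 2 / 2))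
    (h₂ : ∫ a, exp (t * (∫ z, F (a, z) ∂γ - ∫ x, F x ∂ν.prod γ)) ∂ν ≤ exp (c₂ * t ^ 2 / 2)) :
    ∫ x, exp (t * (F x - ∫ x', F x' ∂ν.prod γ)) ∂ν.prod γ ≤ exp ((c₁ + c₂) * t ^ 2 / 2) := by
  set m := ∫ x, F x ∂ν.prod γ
  set G : α → ℝ := fun a => ∫ z, F (a, z) ∂γ
  have hG : Measurable G := hF.stronglyMeasurable.integral_prod_right'.measurable
  have hsplit (a : α) : ∫ z, exp (t * (F (a, z) - m)) ∂γ
      = exp (t * (G a - m)) * ∫ z, exp (t * (F (a, z) - G a)) ∂γ := by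
    rw [← integral_const_mul]; congr with z; rw [← exp_add]; ring_nf
  have hbound (y x : ℝ) (hx : |x| ≤ M) : |t * (x - y)| ≤ |t| * (M + |y|) := by
    rw [abs_mul]; gcongr; exact (abs_sub _ _).trans (by gcongr)
  rw [integral_prod _ (integrable_exp_of_abs_le (by fun_prop) fun x => hbound m _ (hb x))]
  calc ∫ a, ∫ z, exp (t * (F (a, z) - m)) ∂γ ∂ν
      ≤ ∫ a, exp (t * (G a - m)) * exp (c₁ * t ^ 2 / 2) ∂ν := by
        refine integral_mono_of_nonneg
          (ae_of_all _ fun a => integral_nonneg fun _ => (exp_pos _).le) ?_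
          (ae_of_all _ fun a => ?_)
        · exact (integrable_exp_of_abs_le ((hG.sub_const m).const_mul t)
            fun a => hbound m _ (abs_integral_le_of_abs_le fun z => hb (a, z))).mul_const _
        · dsimp only
          rw [hsplit]; gcongr; exact h₁ a
    _ ≤ exp ((c₁ + c₂) * t ^ 2 / 2) := by
        rw [integral_mul_const, add_mul, add_div, exp_add, mul_comm]
        gcongr

lemma LipschitzWith.integral_comp_const_add {K : ℝ≥0} {φ : ℝ → ℝ} {M : ℝ}
    (hφ : LipschitzWith K φ) (hb : ∀ x, |φ x| ≤ M) (μ : Measure ℝ) [IsProbabilityMeasure μ] :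
    LipschitzWith K (fun a => ∫ z, φ (a + z) ∂μ) := by
  refine LipschitzWith.of_dist_le_mul fun a b => ?_
  have hi (c : ℝ) : Integrable (fun z => φ (c + z)) μ :=
    .of_bound (hφ.continuous.measurable.comp (measurable_const_add c)).aestronglyMeasurable M
      (ae_of_all _ fun z => hb _)
  rw [Real.dist_eq, ← integral_sub (hi a) (hi b)]
  exact abs_integral_le_of_abs_le fun z => by
    simpa [Real.dist_eq] using hφ.dist_le_mul (a + z) (b + z)

lemma LipschitzWith.integral_exp_sub_integral_binomial_prod_gaussianReal_le {K : ℝ≥0}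
    {φ : ℝ → ℝ} {M : ℝ} (hφ : LipschitzWith K φ) (hb : ∀ x, |φ x| ≤ M) (n : ℕ) (p : I)
    (v : ℝ≥0) (t : ℝ) :
    ∫ x, exp (t * (φ (x.1 / n + x.2) - ∫ x', φ (x'.1 / n + x'.2)
        ∂(binomial n p).prod (gaussianReal 0 v))) ∂(binomial n p).prod (gaussianReal 0 v)
      ≤ exp ((K ^ 2 / n + 2 * K ^ 2 * v) * t ^ 2 / 2) := by
  have hφm : Measurable φ := hφ.continuous.measurable
  have hshift (a : ℝ) : LipschitzWith K (fun z => φ (a + z)) := by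
    simpa [Function.comp_def] using hφ.comp (IsometryEquiv.addLeft a).isometry.lipschitz
  have hG (k : ℕ) : |∫ z, φ ((k + 1 : ℕ) / n + z) ∂gaussianReal 0 v
      - ∫ z, φ (k / n + z) ∂gaussianReal 0 v| ≤ K / n := by
    rw [← Real.dist_eq]
    refine ((hφ.integral_comp_const_add hb _).dist_le_mul _ _).trans_eq ?_
    rw [Real.dist_eq, Nat.cast_succ, ← sub_div, add_sub_cancel_left, abs_div, abs_one,
      Nat.abs_cast, mul_one_div]
  have := integral_exp_sub_integral_prod_le (F := fun x : ℕ × ℝ => φ (x.1 / n + x.2))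
    (ν := binomial n p) (γ := gaussianReal 0 v) (t := t) (by fun_prop) (fun x => hb _)
    (c₁ := 2 * K ^ 2 * v) (c₂ := n * (K / n) ^ 2)
    (fun k => (hshift (k / n)).integral_exp_sub_integral_gaussianReal_le (fun _ => hb _) v t) ?_
  · refine this.trans_eq (congrArg (fun c => exp (c * t ^ 2 / 2)) ?_)
    rcases n.eq_zero_or_pos with rfl | hn
    · simp
    · field_simp; ring
  · rw [integral_prod _ (Integrable.of_bound (by fun_prop : Measurable _).aestronglyMeasurable M
      (ae_of_all _ fun x => hb _))]
    exact integral_exp_sub_integral_binomial_le p hG t n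

/-- **Lemma H.2 (SubGaussianity of the clipped logit of a Gaussian-perturbed binomial
proportion).** Fix `β ∈ (1/2, 1)`. There is a constant `C > 0` depending only on `β`
such that for all `ε, δ ∈ (0,1)`, `n ≥ 1`, `p ∈ [1−β, β]`, `Y_n ~ Binomial(n, p)` and
`X̃_n = Y_n/n + ξ_n` with `ξ_n` an independent Gaussian of mean `0` and variance
`2·log(1.25/δ)/(εn)²`, the random variable `f(X̃_n)` is subGaussian with variance
proxy at most `C·(1/n + 8·log(1.25/δ)/(εn)²)`. -/
theorem gaussian_perturbed_binomial_clipped_logit_subgaussian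
    (β : ℝ) (hβ : β ∈ Set.Ioo (1 / 2 : ℝ) 1) :
    ∃ C : ℝ, 0 < C ∧
      ∀ ε δ : ℝ, ε ∈ Set.Ioo (0 : ℝ) 1 → δ ∈ Set.Ioo (0 : ℝ) 1 →
      ∀ (n : ℕ), 1 ≤ n → ∀ p : ℝ, p ∈ Set.Icc (1 - β) β →
      ∀ (Ω : Type) [MeasurableSpace Ω] (P : Measure Ω),
        IsProbabilityMeasure P →
      ∀ Y : Ω → ℕ, Measurable Y → HasBinomialLaw P Y n p →
      ∀ ξ : Ω → ℝ, Measurable ξ →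
        P.map ξ =
          ProbabilityTheory.gaussianReal 0
            (Real.toNNReal (2 * Real.log (1.25 / δ) / (ε * n) ^ 2)) →
        ProbabilityTheory.IndepFun (fun ω => (Y ω : ℝ)) ξ P →
      ∀ t : ℝ,
        (∫ ω, Real.exp (t * (flog β ((Y ω : ℝ) / n + ξ ω) -
            ∫ ω', flog β ((Y ω' : ℝ) / n + ξ ω') ∂P)) ∂P) ≤
          Real.exp
            (C * (1 / n + 8 * Real.log (1.25 / δ) / (ε * n) ^ 2) * t ^ 2 / 2) := by
  have hβ' : β ∈ Ico (1 / 2 : ℝ) 1 := ⟨hβ.1.le, hβ.2⟩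
  have hK : ((2 / (1 - β)).toNNReal : ℝ) = 2 / (1 - β) := Real.coe_toNNReal _ (by
    have := hβ.2; positivity)
  refine ⟨(2 / (1 - β)) ^ 2, by have := hβ.2; positivity, ?_⟩
  intro ε δ _ hδ n _ p hp Ω _ P _ Y hY hYlaw ξ hξ hξlaw hindep t
  set v := (2 * log (1.25 / δ) / (ε * n) ^ 2).toNNReal
  have hp' : p ∈ I := ⟨by linarith [hp.1, hβ.2], hp.2.trans hβ.2.le⟩
  have hlaw : P.map (fun ω => (Y ω, ξ ω)) = (binomial n ⟨p, hp'⟩).prod (gaussianReal 0 v) := by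
    rw [← hYlaw.map_eq_binomial hY hp', ← hξlaw]
    refine (indepFun_iff_map_prod_eq_prod_map_map hY.aemeasurable hξ.aemeasurable).1 ?_
    simpa [Function.comp_def] using
      hindep.comp (φ := Nat.floor) (ψ := id) Nat.measurable_floor measurable_id
  have hflog : Measurable (flog β) := (lipschitzWith_flog hβ').continuous.measurable
  have key := (lipschitzWith_flog hβ').integral_exp_sub_integral_binomial_prod_gaussianReal_le
    (abs_flog_le hβ') n ⟨p, hp'⟩ v t
  have hYξ : AEMeasurable (fun ω => (Y ω, ξ ω)) P := (hY.prodMk hξ).aemeasurable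
  rw [← hlaw, integral_map hYξ (by fun_prop : Measurable _).aestronglyMeasurable,
    integral_map hYξ (by fun_prop : Measurable _).aestronglyMeasurable, hK] at key
  refine key.trans (exp_le_exp.2 ?_)
  have hΛ : 0 ≤ log (1.25 / δ) := log_nonneg (by rw [le_div_iff₀ hδ.1]; linarith [hδ.2])
  have hv : (v : ℝ) = 2 * log (1.25 / δ) / (ε * n) ^ 2 := Real.coe_toNNReal _ (by positivity)
  rw [hv]
  have : 0 ≤ (2 / (1 - β)) ^ 2 * (log (1.25 / δ) / (ε * n) ^ 2) * t ^ 2 := by positivity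
  linear_combination 2 * this
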